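/- arXiv:2502.15575 — 2 statements merged into one kernel-verified Lean document; each statement's English description precedes it below -/
import Mathlib

section
/- For every real number β ≥ 0, one has e^{-β} = (1/√π) ∫_0^∞ u^{-1/2} e^{-u} e^{-β²/(4u)} du, where the integral is over u ∈ (0, ∞). -/
open MeasureTheory Real Set

lemma image_sq_Ioi : (fun t : ℝ => t ^ 2) '' Set.Ioi 0 = Set.Ioi 0 := by
  ext x
  constructor
  · rintro ⟨t, ht, rfl⟩; exact pow_pos (mem_Ioi.mp ht) 2
  · intro hx
    exact ⟨Real.sqrt x, Real.sqrt_pos.mpr hx, Real.sq_sqrt hx.le⟩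

lemma image_cdiv_Ioi {c : ℝ} (hc : 0 < c) : (fun s : ℝ => c / s) '' Set.Ioi 0 = Set.Ioi 0 := by
  ext x
  constructor
  · rintro ⟨s, hs, rfl⟩; exact div_pos hc hs
  · intro hx
    exact ⟨c / x, div_pos hc hx, by field_simp⟩

lemma image_sub_cdiv_Ioi {c : ℝ} (hc : 0 < c) :
    (fun s : ℝ => s - c / s) '' Set.Ioi 0 = Set.univ := by
  ext y
  simp only [Set.mem_univ, iff_true]
  set s := (y + Real.sqrt (y ^ 2 + 4 * c)) / 2 with hs
  have h4 : 0 < y ^ 2 + 4 * c := by positivity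
  have hsq : Real.sqrt (y ^ 2 + 4 * c) ^ 2 = y ^ 2 + 4 * c := Real.sq_sqrt h4.le
  have habs : |y| < Real.sqrt (y ^ 2 + 4 * c) := by
    rw [← Real.sqrt_sq_eq_abs]
    exact Real.sqrt_lt_sqrt (sq_nonneg y) (by linarith)
  have hy : -y < Real.sqrt (y ^ 2 + 4 * c) := lt_of_le_of_lt (neg_le_abs y) habs
  have hspos : 0 < s := by rw [hs]; linarith
  refine ⟨s, hspos, ?_⟩
  have hkey : s ^ 2 = y * s + c := by
    rw [hs]; nlinarith [hsq]
  field_simp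
  nlinarith [hkey]

lemma injOn_sq : Set.InjOn (fun t : ℝ => t ^ 2) (Set.Ioi 0) := by
  intro a ha b hb h
  simp only [Set.mem_Ioi] at ha hb
  simp only at h
  nlinarith

lemma injOn_cdiv {c : ℝ} (hc : 0 < c) : Set.InjOn (fun s : ℝ => c / s) (Set.Ioi 0) := by
  intro a ha b hb h
  simp only [Set.mem_Ioi] at ha hb
  simp only at h
  have := hc.ne'
  field_simp at h
  tauto

lemma strictMonoOn_sub_cdiv {c : ℝ} (hc : 0 < c) :
    StrictMonoOn (fun s : ℝ => s - c / s) (Set.Ioi 0) := by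
  intro a ha b hb hab
  simp only [Set.mem_Ioi] at ha hb
  simp only
  have : c / b < c / a := div_lt_div_of_pos_left hc ha hab
  linarith

lemma rpow_sq_neg_half {t : ℝ} (ht : 0 < t) : (t ^ 2 : ℝ) ^ (-(1 : ℝ) / 2) = t⁻¹ := by
  rw [← Real.rpow_natCast t 2, ← Real.rpow_mul ht.le]
  norm_num
  rw [Real.rpow_neg_one]

/-- **Subordination identity.** For every real `β ≥ 0`,
`e^{-β} = (1/√π) ∫_0^∞ u^{-1/2} e^{-u} e^{-β²/(4u)} du`. -/
theorem exp_neg_eq_gaussian_mixture (β : ℝ) (hβ : 0 ≤ β) :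
    Real.exp (-β) =
      (1 / Real.sqrt Real.pi) *
        ∫ u in Set.Ioi (0 : ℝ),
          u ^ (-(1 : ℝ) / 2) * Real.exp (-u) * Real.exp (-β ^ 2 / (4 * u)) := by
  have sqrtpi_pos : 0 < Real.sqrt Real.pi := Real.sqrt_pos.mpr Real.pi_pos
  rcases hβ.eq_or_lt with rfl | hβpos
  · -- β = 0
    have h0 : (∫ u in Set.Ioi (0 : ℝ),
        u ^ (-(1 : ℝ) / 2) * Real.exp (-u) * Real.exp (-(0:ℝ) ^ 2 / (4 * u)))
        = Real.Gamma (1/2) := by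
      rw [Real.Gamma_eq_integral (by norm_num : (0:ℝ) < 1/2)]
      refine setIntegral_congr_fun measurableSet_Ioi (fun u hu => ?_)
      norm_num [mul_comm]
    rw [h0, Real.Gamma_one_half_eq]
    rw [one_div, inv_mul_cancel₀ sqrtpi_pos.ne']
    simp
  · -- β > 0
    set c : ℝ := β / 2 with hc_def
    have hc : 0 < c := by positivity
    -- Step 1: u = t^2
    have h1 : (∫ u in Set.Ioi (0 : ℝ),
        u ^ (-(1 : ℝ) / 2) * Real.exp (-u) * Real.exp (-β ^ 2 / (4 * u)))
        = ∫ t in Set.Ioi (0:ℝ), (2 * Real.exp (-β)) * Real.exp (-(t - c/t)^2) := by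
      have hcov := integral_image_eq_integral_abs_deriv_smul (f' := fun t : ℝ => 2 * t)
        measurableSet_Ioi
        (fun x _ => by simpa using (hasDerivAt_pow 2 x).hasDerivWithinAt (s := Set.Ioi 0))
        injOn_sq
        (fun u : ℝ => u ^ (-(1 : ℝ) / 2) * Real.exp (-u) * Real.exp (-β ^ 2 / (4 * u)))
      rw [image_sq_Ioi] at hcov
      rw [hcov]
      refine setIntegral_congr_fun measurableSet_Ioi (fun t ht => ?_)
      simp only [Set.mem_Ioi] at ht
      have h2t : |2 * t| = 2 * t := abs_of_pos (by linarith)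
      rw [smul_eq_mul, h2t, rpow_sq_neg_half ht]
      have hexp : Real.exp (-t^2) * Real.exp (-β^2 / (4 * t^2))
          = Real.exp (-β) * Real.exp (-(t - c/t)^2) := by
        rw [← Real.exp_add, ← Real.exp_add]
        congr 1
        have ht2 : (t:ℝ)^2 ≠ 0 := by positivity
        field_simp [hc_def]
        ring
      calc 2 * t * (t⁻¹ * Real.exp (-t^2) * Real.exp (-β^2 / (4*t^2)))
          = 2 * (t * t⁻¹) * (Real.exp (-t^2) * Real.exp (-β^2 / (4*t^2))) := by ring
        _ = 2 * Real.exp (-β) * Real.exp (-(t - c/t)^2) := by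
            rw [mul_inv_cancel₀ ht.ne', hexp]; ring
    -- derivative facts
    have hder_cdiv : ∀ x ∈ Set.Ioi (0:ℝ),
        HasDerivWithinAt (fun s : ℝ => c / s) (-(c / x^2)) (Set.Ioi 0) x := by
      intro x hx
      simp only [Set.mem_Ioi] at hx
      have := ((hasDerivAt_inv hx.ne').const_mul c).hasDerivWithinAt (s := Set.Ioi 0)
      simpa [div_eq_mul_inv, mul_comm, neg_div] using this
    have hder_sub : ∀ x ∈ Set.Ioi (0:ℝ),
        HasDerivWithinAt (fun s : ℝ => s - c / s) (1 + c / x^2) (Set.Ioi 0) x := by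
      intro x hx
      simp only [Set.mem_Ioi] at hx
      have := ((hasDerivAt_id x).sub
        ((hasDerivAt_inv hx.ne').const_mul c)).hasDerivWithinAt (s := Set.Ioi 0)
      simpa [div_eq_mul_inv, mul_comm, sub_neg_eq_add, Pi.sub_def] using this
    -- Step 2: symmetrization J = J'
    have h2 : (∫ t in Set.Ioi (0:ℝ), Real.exp (-(t - c/t)^2))
        = ∫ s in Set.Ioi (0:ℝ), (c / s^2) * Real.exp (-(s - c/s)^2) := by
      conv_lhs => rw [← image_cdiv_Ioi hc]
      rw [integral_image_eq_integral_abs_deriv_smul measurableSet_Ioi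
        (f' := fun x => -(c / x^2)) hder_cdiv (injOn_cdiv hc)]
      refine setIntegral_congr_fun measurableSet_Ioi (fun s hs => ?_)
      simp only [Set.mem_Ioi] at hs
      have h1 : |(-(c / s^2))| = c / s^2 := by
        rw [abs_neg, abs_of_pos (by positivity)]
      have h2 : c / (c / s) = s := by field_simp
      rw [smul_eq_mul, h1, h2]
      congr 2
      ring
    -- Step 3: Glasser
    have himg := image_sub_cdiv_Ioi hc
    have hgauss : Integrable (fun w : ℝ => Real.exp (-w^2)) := by
      simpa using integrable_exp_neg_mul_sq (one_pos)
    have h3 : (∫ s in Set.Ioi (0:ℝ), (1 + c / s^2) * Real.exp (-(s - c/s)^2))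
        = Real.sqrt Real.pi := by
      have key := integral_image_eq_integral_abs_deriv_smul measurableSet_Ioi
        (f' := fun x => 1 + c / x^2) hder_sub
        ((strictMonoOn_sub_cdiv hc).injOn) (fun w => Real.exp (-w^2))
      rw [himg] at key
      have heq : (∫ s in Set.Ioi (0:ℝ), (1 + c / s^2) * Real.exp (-(s - c/s)^2))
          = ∫ x in Set.Ioi (0:ℝ), |1 + c / x^2| • Real.exp (-((x : ℝ) - c/x)^2) := by
        refine setIntegral_congr_fun measurableSet_Ioi (fun s hs => ?_)
        simp only [Set.mem_Ioi] at hs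
        rw [smul_eq_mul, abs_of_pos (by positivity)]
      rw [heq, ← key, MeasureTheory.setIntegral_univ]
      simpa using integral_gaussian (1:ℝ)
    -- integrability
    have hbig : IntegrableOn (fun s : ℝ => (1 + c / s^2) * Real.exp (-(s - c/s)^2))
        (Set.Ioi 0) := by
      have := (integrableOn_image_iff_integrableOn_abs_deriv_smul measurableSet_Ioi
        hder_sub ((strictMonoOn_sub_cdiv hc).injOn) (fun w => Real.exp (-w^2))).mp
        (by rw [himg]; exact hgauss.integrableOn)
      refine this.congr_fun (fun s hs => ?_) measurableSet_Ioi
      simp only [Set.mem_Ioi] at hs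
      beta_reduce
      rw [smul_eq_mul, abs_of_pos (by positivity)]
    have hcont : ContinuousOn (fun s : ℝ => Real.exp (-(s - c/s)^2)) (Set.Ioi 0) := by
      fun_prop (disch := intro x hx; exact (ne_of_gt hx))
    have hJi : IntegrableOn (fun s : ℝ => Real.exp (-(s - c/s)^2)) (Set.Ioi 0) := by
      refine Integrable.mono hbig (hcont.aestronglyMeasurable measurableSet_Ioi) ?_
      filter_upwards [ae_restrict_mem measurableSet_Ioi] with s hs
      simp only [Set.mem_Ioi] at hs
      rw [Real.norm_eq_abs, Real.norm_eq_abs, abs_of_pos (Real.exp_pos _),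
        abs_of_pos (by positivity)]
      nlinarith [Real.exp_pos (-(s - c/s)^2), div_pos hc (sq_pos_of_pos hs)]
    have hJ'i : IntegrableOn (fun s : ℝ => (c / s^2) * Real.exp (-(s - c/s)^2))
        (Set.Ioi 0) := by
      have hcont2 : ContinuousOn (fun s : ℝ => (c / s^2) * Real.exp (-(s - c/s)^2))
          (Set.Ioi 0) := by
        fun_prop (disch := intro x hx; simp only [Set.mem_Ioi] at hx; positivity)
      refine Integrable.mono hbig (hcont2.aestronglyMeasurable measurableSet_Ioi) ?_
      filter_upwards [ae_restrict_mem measurableSet_Ioi] with s hs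
      simp only [Set.mem_Ioi] at hs
      rw [Real.norm_eq_abs, Real.norm_eq_abs, abs_of_pos (by positivity),
        abs_of_pos (by positivity)]
      nlinarith [Real.exp_pos (-(s - c/s)^2), div_pos hc (sq_pos_of_pos hs)]
    -- combine
    have hsplit : (∫ s in Set.Ioi (0:ℝ), (1 + c / s^2) * Real.exp (-(s - c/s)^2))
        = (∫ s in Set.Ioi (0:ℝ), Real.exp (-(s - c/s)^2))
          + ∫ s in Set.Ioi (0:ℝ), (c / s^2) * Real.exp (-(s - c/s)^2) := by
      rw [← integral_add hJi hJ'i]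
      refine setIntegral_congr_fun measurableSet_Ioi (fun s hs => ?_)
      ring
    have hJval : (∫ t in Set.Ioi (0:ℝ), Real.exp (-(t - c/t)^2))
        = Real.sqrt Real.pi / 2 := by
      have := h3
      rw [hsplit, ← h2] at this
      linarith
    rw [h1, MeasureTheory.integral_const_mul, hJval]
    rw [eq_comm]
    field_simp
end

section
/- Let d ≥ 1 and let M be a symmetric positive definite d×d real matrix. Let ((u_i, v_i))_{i∈ℕ} be an i.i.d. sequence where, for each i, u_i is an ℝ^d-valued random vector with law N(0, M), v_i is a real standard Gaussian N(0,1), and u_i is independent of v_i. Then for every x, z ∈ ℝ^d, almost surely lim_{p→∞} (1/p) Σ_{i=1}^p cos(⟨u_i/v_i, x − z⟩) = e^{−‖x−z‖_M}; equivalently, the SinCos random features with weight rows w_i = u_i/v_i satisfy ⟨ψ_p(Wx), ψ_p(Wz)⟩ → K^L(x,z) = e^{−‖x−z‖_M} almost surely as p → ∞. -/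
open MeasureTheory ProbabilityTheory Real Filter

/-- The quadratic form `x ↦ xᵀ M x` on `ℝ^d`, so that the Mahalanobis norm is
`‖x‖_M = √(quadForm M x)`. -/
noncomputable def quadForm {d : ℕ} (M : Matrix (Fin d) (Fin d) ℝ)
    (x : EuclideanSpace ℝ (Fin d)) : ℝ :=
  dotProduct (fun i => x i) (M.mulVec fun i => x i)

/-- The multivariate Gaussian `N(0, M)` on `ℝ^d`: the probability measure with density
`(2π)^{-d/2} (det M)^{-1/2} exp(-xᵀ M⁻¹ x / 2)` with respect to Lebesgue measure. -/
noncomputable def gaussianMeasure {d : ℕ} (M : Matrix (Fin d) (Fin d) ℝ) :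
    Measure (EuclideanSpace ℝ (Fin d)) :=
  volume.withDensity fun x => ENNReal.ofReal
    ((2 * Real.pi) ^ (-(d : ℝ) / 2) * M.det ^ (-(1 : ℝ) / 2) *
      Real.exp (-quadForm M⁻¹ x / 2))

open Set Matrix
open scoped Real ENNReal NNReal

lemma glasser_aux (σ : ℝ) (hσ : 0 < σ) :
    (fun x : ℝ => x - σ / x) '' Ioi 0 = univ := by
  apply eq_univ_of_forall
  intro t
  have hs : Real.sqrt (t^2 + 4*σ) ^ 2 = t^2 + 4*σ := Real.sq_sqrt (by positivity)
  have h1 : |t| < Real.sqrt (t^2 + 4*σ) := by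
    rw [← Real.sqrt_sq_eq_abs]
    exact Real.sqrt_lt_sqrt (sq_nonneg t) (by linarith)
  have h2 := neg_abs_le t
  have hx : (0:ℝ) < (t + Real.sqrt (t^2 + 4*σ)) / 2 := by nlinarith [abs_nonneg t]
  refine ⟨(t + Real.sqrt (t^2 + 4*σ)) / 2, hx, ?_⟩
  set x := (t + Real.sqrt (t^2 + 4*σ)) / 2 with hxdef
  have hxne : x ≠ 0 := ne_of_gt hx
  have hkey : σ / x = x - t := by
    rw [div_eq_iff hxne, hxdef]
    nlinarith [hs]
  simp only [hkey]
  ring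

lemma glasser_inj (σ : ℝ) (hσ : 0 < σ) : InjOn (fun x : ℝ => x - σ / x) (Ioi 0) := by
  have : StrictMonoOn (fun x : ℝ => x - σ / x) (Ioi 0) := by
    intro a ha b hb hab
    simp only [mem_Ioi] at ha hb
    have : σ / b < σ / a := div_lt_div_of_pos_left hσ ha hab
    simp only
    linarith
  exact this.injOn

lemma glasser_integrable (σ : ℝ) :
    Integrable (fun x : ℝ => Real.exp (-(x^2/2) - σ^2/(2*x^2))) := by
  apply Integrable.mono' (g := fun x : ℝ => Real.exp (-(x^2/2)))
  · have h := integrable_exp_neg_mul_sq (by norm_num : (0:ℝ) < 1/2)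
    apply h.congr
    filter_upwards with x
    rw [show -(1/2:ℝ)*x^2 = -(x^2/2) by ring]
  · apply Measurable.aestronglyMeasurable; fun_prop
  · filter_upwards with x
    rw [Real.norm_eq_abs, Real.abs_exp]
    apply Real.exp_le_exp.mpr
    have : 0 ≤ σ^2/(2*x^2) := by positivity
    linarith

lemma glasser_Ioi (σ : ℝ) (hσ : 0 < σ) :
    ∫ x in Ioi (0:ℝ), Real.exp (-(x^2/2) - σ^2/(2*x^2))
      = Real.sqrt (2*π) / 2 * Real.exp (-σ) := by
  set φ : ℝ → ℝ := fun x => Real.exp (-(x^2/2) - σ^2/(2*x^2)) with hφ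
  have hint : IntegrableOn φ (Ioi (0:ℝ)) := (glasser_integrable σ).integrableOn
  -- data for the substitution x ↦ σ/x
  have himg : (fun x : ℝ => σ / x) '' Ioi 0 = Ioi 0 := by
    ext t
    constructor
    · rintro ⟨x, hx, rfl⟩
      exact div_pos hσ hx
    · intro ht
      exact ⟨σ / t, div_pos hσ ht, by field_simp⟩
  have hderiv : ∀ x ∈ Ioi (0:ℝ), HasDerivWithinAt (fun x : ℝ => σ / x) (-(σ/x^2)) (Ioi 0) x := by
    intro x hx
    have : HasDerivAt (fun x : ℝ => σ / x) (-(σ/x^2)) x := by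
      simpa [div_eq_mul_inv, sq] using ((hasDerivAt_inv (ne_of_gt hx)).const_mul σ)
    exact this.hasDerivWithinAt
  have hinj : InjOn (fun x : ℝ => σ / x) (Ioi 0) := by
    intro a ha b hb hab
    simp only [mem_Ioi] at ha hb
    simp only at hab
    rw [div_eq_div_iff (ne_of_gt ha) (ne_of_gt hb)] at hab
    exact (mul_left_cancel₀ (ne_of_gt hσ) hab.symm)
  have hφinv : Set.EqOn (fun x : ℝ => |(-(σ/x^2))| • φ (σ / x)) (fun x : ℝ => (σ/x^2) * φ x)
      (Ioi (0:ℝ)) := by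
    intro x hx
    simp only [mem_Ioi] at hx
    have hx' : x ≠ 0 := ne_of_gt hx
    have hφx : φ (σ / x) = φ x := by
      rw [hφ]; simp only; congr 1; field_simp; ring
    simp only [hφx, smul_eq_mul, abs_neg, abs_of_nonneg (by positivity : (0:ℝ) ≤ σ/x^2)]
  -- step 1: substitution x ↦ σ/x shows ∫ (σ/x²) φ x = ∫ φ
  have hsub1 : ∫ x in Ioi (0:ℝ), (σ/x^2) * φ x = ∫ x in Ioi (0:ℝ), φ x := by
    have := integral_image_eq_integral_abs_deriv_smul measurableSet_Ioi hderiv hinj φ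
    rw [himg] at this
    rw [this]
    exact (setIntegral_congr_fun measurableSet_Ioi hφinv).symm
  -- integrability of (σ/x²) φ x on Ioi 0
  have hint2 : IntegrableOn (fun x : ℝ => (σ/x^2) * φ x) (Ioi (0:ℝ)) := by
    have := (integrableOn_image_iff_integrableOn_abs_deriv_smul measurableSet_Ioi hderiv hinj φ)
    rw [himg] at this
    exact (this.mp hint).congr_fun hφinv measurableSet_Ioi
  -- step 2: substitution t = x - σ/x
  have hsub2 : Real.sqrt (2*π) = ∫ x in Ioi (0:ℝ), (1 + σ/x^2) * (Real.exp σ * φ x) := by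
    have hderiv2 : ∀ x ∈ Ioi (0:ℝ),
        HasDerivWithinAt (fun x : ℝ => x - σ / x) (1 + σ/x^2) (Ioi 0) x := by
      intro x hx
      have : HasDerivAt (fun x : ℝ => x - σ / x) (1 - (-(σ/x^2))) x := by
        apply (hasDerivAt_id x).sub
        exact (by simpa [div_eq_mul_inv, sq] using ((hasDerivAt_inv (ne_of_gt hx)).const_mul σ) :
          HasDerivAt (fun x : ℝ => σ / x) (-(σ/x^2)) x)
      simpa [sub_neg_eq_add] using this.hasDerivWithinAt
    have key := integral_image_eq_integral_abs_deriv_smul measurableSet_Ioi hderiv2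
      (glasser_inj σ hσ) (fun t => Real.exp (-(t^2/2)))
    rw [glasser_aux σ hσ, setIntegral_univ] at key
    have hgauss : ∫ t : ℝ, Real.exp (-(t^2/2)) = Real.sqrt (2*π) := by
      have h0 := integral_gaussian (1/2 : ℝ)
      rw [show (π / (1/2:ℝ)) = 2*π by ring] at h0
      rw [← h0]
      congr 1 with t
      rw [show -(1/2:ℝ)*t^2 = -(t^2/2) by ring]
    rw [hgauss] at key
    rw [key]
    apply setIntegral_congr_fun measurableSet_Ioi
    intro x hx
    simp only [mem_Ioi] at hx
    have hx' : x ≠ 0 := ne_of_gt hx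
    have h1 : -((x - σ/x)^2/2) = σ + (-(x^2/2) - σ^2/(2*x^2)) := by
      field_simp
      ring
    simp only [smul_eq_mul, abs_of_nonneg (by positivity : (0:ℝ) ≤ 1 + σ/x^2), h1,
      Real.exp_add, hφ]
  -- step 3: combine
  have hsplit : ∫ x in Ioi (0:ℝ), (1 + σ/x^2) * (Real.exp σ * φ x)
      = Real.exp σ * ((∫ x in Ioi (0:ℝ), φ x) + ∫ x in Ioi (0:ℝ), (σ/x^2) * φ x) := by
    rw [← integral_add hint hint2, ← integral_const_mul]
    apply setIntegral_congr_fun measurableSet_Ioi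
    intro x _
    ring
  rw [hsplit, hsub1] at hsub2
  have hexp : Real.exp σ ≠ 0 := Real.exp_ne_zero σ
  have : Real.sqrt (2*π) = Real.exp σ * (2 * ∫ x in Ioi (0:ℝ), φ x) := by
    rw [hsub2]; ring
  rw [Real.exp_neg, this]
  field_simp

lemma glasser (σ : ℝ) (hσ : 0 < σ) :
    ∫ x : ℝ, Real.exp (-(x^2/2) - σ^2/(2*x^2)) = Real.sqrt (2*π) * Real.exp (-σ) := by
  set φ : ℝ → ℝ := fun x => Real.exp (-(x^2/2) - σ^2/(2*x^2)) with hφ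
  have hint := glasser_integrable σ
  have heven : ∀ x : ℝ, φ (-x) = φ x := by
    intro x; rw [hφ]; simp only; congr 2 <;> ring
  have hIic : ∫ x in Iic (0:ℝ), φ x = ∫ x in Ioi (0:ℝ), φ x := by
    have := integral_comp_neg_Ioi (c := (0:ℝ)) φ
    simp only [neg_zero] at this
    rw [← this]
    simp_rw [heven]
  rw [← intervalIntegral.integral_Iic_add_Ioi (b := (0:ℝ)) hint.integrableOn hint.integrableOn,
    hIic, glasser_Ioi σ hσ]
  ring

lemma gauss_cos_pi (d : ℕ) (t : Fin d → ℝ) :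
    ∫ y : Fin d → ℝ, Real.exp (-∑ i, (y i)^2/2) * Real.cos (∑ i, t i * y i)
      = ((2*π) ^ ((1:ℝ)/2))^d * Real.exp (-(∑ i, (t i)^2)/2) := by
  have hb : ∀ i : Fin d, 0 < ((1:ℂ)/2).re := by intro i; norm_num
  have hkey := GaussianFourier.integral_cexp_neg_sum_mul_add (ι := Fin d) (b := fun _ => (1:ℂ)/2)
    hb (fun i => (t i : ℂ) * Complex.I)
  have hInt : Integrable (fun y : Fin d → ℝ =>
      Complex.exp (-∑ i, (1:ℂ)/2 * (y i:ℂ)^2 + ∑ i, ((t i : ℂ) * Complex.I) * (y i:ℂ))) := by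
    have h1 : ∀ i : Fin d, Integrable (fun v : ℝ =>
        Complex.exp (-((1:ℂ)/2) * (v:ℂ)^2 + ((t i : ℂ) * Complex.I) * (v:ℂ))) := by
      intro i
      have h0 := integrable_cexp_quadratic (show 0 < ((1:ℂ)/2).re by norm_num)
        ((t i : ℂ) * Complex.I) 0
      apply h0.congr
      filter_upwards with v
      congr 1
      ring
    have h2 := Integrable.fintype_prod (E := ℝ) (f := fun i (v : ℝ) =>
      Complex.exp (-((1:ℂ)/2) * (v:ℂ)^2 + ((t i : ℂ) * Complex.I) * (v:ℂ))) h1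
    apply h2.congr
    filter_upwards with y
    rw [← Complex.exp_sum]
    congr 1
    rw [Finset.sum_add_distrib]
    congr 1
    rw [← Finset.sum_neg_distrib]
    exact Finset.sum_congr rfl fun i _ => by ring
  have hre : ∀ y : Fin d → ℝ,
      (Complex.exp (-∑ i, (1:ℂ)/2 * (y i:ℂ)^2 + ∑ i, ((t i : ℂ) * Complex.I) * (y i:ℂ))).re
        = Real.exp (-∑ i, (y i)^2/2) * Real.cos (∑ i, t i * y i) := by
    intro y
    have harg : (-∑ i, (1:ℂ)/2 * (y i:ℂ)^2 + ∑ i, ((t i : ℂ) * Complex.I) * (y i:ℂ))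
        = Complex.ofReal (-∑ i, (y i)^2/2) + Complex.ofReal (∑ i, t i * y i) * Complex.I := by
      push_cast
      rw [Finset.sum_mul]
      congr 1
      · rw [neg_inj]
        exact Finset.sum_congr rfl fun i _ => by ring
      · exact Finset.sum_congr rfl fun i _ => by ring
    rw [harg, Complex.exp_re]
    simp only [Complex.add_re, Complex.add_im, Complex.ofReal_re, Complex.ofReal_im,
      Complex.mul_re, Complex.mul_im, Complex.I_re, Complex.I_im, mul_zero, mul_one,
      zero_mul, sub_zero, zero_add, zero_sub, add_zero]
  have h3 := integral_re hInt
  simp only [RCLike.re_to_complex] at h3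
  have hL : ∫ y : Fin d → ℝ, Real.exp (-∑ i, (y i)^2/2) * Real.cos (∑ i, t i * y i)
      = (∫ y : Fin d → ℝ, Complex.exp
          (-∑ i, (1:ℂ)/2 * (y i:ℂ)^2 + ∑ i, ((t i : ℂ) * Complex.I) * (y i:ℂ))).re := by
    rw [← h3]
    congr 1 with y
    rw [hre]
  rw [hL, hkey]
  have h1 : (↑π / ((1:ℂ)/2)) = (2:ℂ) * ↑π := by ring
  have h2 : ∀ i : Fin d, ((t i:ℂ) * Complex.I) ^ 2 / (4 * ((1:ℂ)/2))
      = Complex.ofReal (-(t i)^2/2) := by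
    intro i
    rw [mul_pow, Complex.I_sq]
    push_cast
    ring
  have hS : (∑ i : Fin d, -(t i)^2/2) = (-(∑ i : Fin d, (t i)^2))/2 := by
    simp only [neg_div, Finset.sum_div, ← Finset.sum_neg_distrib]
  have hX : ((2:ℂ) * ↑π) ^ ((1:ℂ)/2 : ℂ) = Complex.ofReal ((2*π) ^ ((1:ℝ)/2)) := by
    rw [Complex.ofReal_cpow (by positivity : (0:ℝ) ≤ 2*π)]
    push_cast
    norm_num
  have hprod : ∏ i : Fin d, (↑π / ((1:ℂ)/2)) ^ (1 / 2 : ℂ)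
        * Complex.exp (((t i:ℂ) * Complex.I) ^ 2 / (4 * ((1:ℂ)/2)))
      = Complex.ofReal (((2*π) ^ ((1:ℝ)/2))^d * Real.exp (-(∑ i, (t i)^2)/2)) := by
    simp_rw [h1, h2]
    rw [Finset.prod_mul_distrib, Finset.prod_const, ← Complex.exp_sum, ← Complex.ofReal_sum,
      hS, hX, Finset.card_univ, Fintype.card_fin, ← Complex.ofReal_pow, ← Complex.ofReal_exp,
      ← Complex.ofReal_mul]
  rw [hprod, Complex.ofReal_re]

open scoped MatrixOrder in
noncomputable def Matrix.PosSemidef.sqrt {d : ℕ} {M : Matrix (Fin d) (Fin d) ℝ}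
    (_h : M.PosSemidef) : Matrix (Fin d) (Fin d) ℝ := CFC.sqrt M

open scoped MatrixOrder in
lemma Matrix.PosSemidef.posSemidef_sqrt {d : ℕ} {M : Matrix (Fin d) (Fin d) ℝ}
    (h : M.PosSemidef) : h.sqrt.PosSemidef := (CFC.sqrt_nonneg M).posSemidef

open scoped MatrixOrder in
lemma Matrix.PosSemidef.sqrt_mul_self {d : ℕ} {M : Matrix (Fin d) (Fin d) ℝ}
    (h : M.PosSemidef) : h.sqrt * h.sqrt = M := CFC.sqrt_mul_sqrt_self M h.nonneg

section matrixfacts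
variable {d : ℕ} {M : Matrix (Fin d) (Fin d) ℝ}

lemma dot_mulVec_left (B : Matrix (Fin d) (Fin d) ℝ) (y w : Fin d → ℝ) :
    dotProduct (B.mulVec y) w = dotProduct y (Bᵀ.mulVec w) := by
  rw [dotProduct_comm, Matrix.dotProduct_mulVec, Matrix.mulVec_transpose,
    dotProduct_comm]

variable (hM : M.PosDef)

lemma sqrt_symm : (hM.posSemidef.sqrt)ᵀ = hM.posSemidef.sqrt := by
  have h := hM.posSemidef.posSemidef_sqrt.isHermitian
  simpa [Matrix.IsHermitian, Matrix.conjTranspose_eq_transpose_of_trivial] using h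

lemma sqrt_mul_self' : hM.posSemidef.sqrt * hM.posSemidef.sqrt = M :=
  hM.posSemidef.sqrt_mul_self

lemma sqrt_det_sq : hM.posSemidef.sqrt.det * hM.posSemidef.sqrt.det = M.det := by
  rw [← Matrix.det_mul, sqrt_mul_self' hM]

lemma sqrt_det_ne : hM.posSemidef.sqrt.det ≠ 0 := by
  intro h
  have := sqrt_det_sq hM
  rw [h, mul_zero] at this
  exact (ne_of_gt hM.det_pos) this.symm

lemma sqrt_det_abs : |hM.posSemidef.sqrt.det| = Real.sqrt M.det := by
  rw [← sqrt_det_sq hM, Real.sqrt_mul_self_eq_abs]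

lemma sqrt_cancel : hM.posSemidef.sqrt * M⁻¹ * hM.posSemidef.sqrt = 1 := by
  set A := hM.posSemidef.sqrt
  have hA : IsUnit A.det := (Ne.isUnit (sqrt_det_ne hM))
  rw [← sqrt_mul_self' hM, Matrix.mul_inv_rev]
  calc A * (A⁻¹ * A⁻¹) * A = A * A⁻¹ * (A⁻¹ * A) := by noncomm_ring
    _ = 1 := by rw [Matrix.mul_nonsing_inv _ hA, Matrix.nonsing_inv_mul _ hA, one_mul]

lemma quad_subst (y : Fin d → ℝ) :
    dotProduct (hM.posSemidef.sqrt.mulVec y)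
      (M⁻¹.mulVec (hM.posSemidef.sqrt.mulVec y)) = ∑ i, (y i)^2 := by
  set A := hM.posSemidef.sqrt
  rw [Matrix.mulVec_mulVec, dot_mulVec_left, Matrix.mulVec_mulVec, sqrt_symm hM,
    show A * (M⁻¹ * A) = A * M⁻¹ * A by noncomm_ring, sqrt_cancel hM, Matrix.one_mulVec]
  simp [dotProduct, sq]

lemma dot_subst (y w : Fin d → ℝ) :
    dotProduct (hM.posSemidef.sqrt.mulVec y) w
      = dotProduct y (hM.posSemidef.sqrt.mulVec w) := by
  rw [dot_mulVec_left, sqrt_symm hM]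

lemma sum_sq_sqrt_mulVec (w : Fin d → ℝ) :
    ∑ i, (hM.posSemidef.sqrt.mulVec w i)^2 = dotProduct w (M.mulVec w) := by
  have h : dotProduct (hM.posSemidef.sqrt.mulVec w) (hM.posSemidef.sqrt.mulVec w)
      = dotProduct w (M.mulVec w) := by
    rw [dot_subst hM, Matrix.mulVec_mulVec, sqrt_mul_self' hM]
  rw [← h]
  simp [dotProduct, sq]

end matrixfacts

section G2
variable {d : ℕ} {M : Matrix (Fin d) (Fin d) ℝ}

lemma cont_dot (B : Matrix (Fin d) (Fin d) ℝ) :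
    Continuous fun y : Fin d → ℝ => dotProduct y (B.mulVec y) := by
  simp only [dotProduct, Matrix.mulVec]
  fun_prop

lemma cont_dot' (w : Fin d → ℝ) :
    Continuous fun y : Fin d → ℝ => dotProduct y w := by
  simp only [dotProduct]
  fun_prop

lemma cov_sqrt (hM : M.PosDef) (h : (Fin d → ℝ) → ℝ) (hc : Continuous h) :
    ∫ y : Fin d → ℝ, h y = |hM.posSemidef.sqrt.det| * ∫ y, h (hM.posSemidef.sqrt.mulVec y) := by
  set A := hM.posSemidef.sqrt with hA
  have hmap := Real.map_matrix_volume_pi_eq_smul_volume_pi (sqrt_det_ne hM)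
  have hac : Measure.map (Matrix.toLin' A) volume ≪ (volume : Measure (Fin d → ℝ)) := by
    rw [hmap]
    exact Measure.smul_absolutelyContinuous
  have e1 : ∫ y, h y ∂(Measure.map (Matrix.toLin' A) volume) = ∫ y, h (A.mulVec y) := by
    rw [integral_map ((LinearMap.continuous_of_finiteDimensional _).aemeasurable)
      (hc.aestronglyMeasurable.mono_ac hac)]
    simp only [Matrix.toLin'_apply]
  rw [← e1, hmap, integral_smul_measure, ENNReal.toReal_ofReal (abs_nonneg _), smul_eq_mul,
    abs_inv, ← mul_assoc, mul_inv_cancel₀ (by simpa using sqrt_det_ne hM), one_mul]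

lemma integral_cos_gaussianMeasure (hM : M.PosDef) (c : ℝ) (a : EuclideanSpace ℝ (Fin d)) :
    ∫ u, Real.cos (c * (inner ℝ u a : ℝ)) ∂(gaussianMeasure M)
      = Real.exp (-(c^2 * quadForm M a)/2) := by
  set C : ℝ := (2 * Real.pi) ^ (-(d : ℝ) / 2) * M.det ^ (-(1 : ℝ) / 2) with hC
  set ρ : EuclideanSpace ℝ (Fin d) → ℝ := fun x => C * Real.exp (-quadForm M⁻¹ x / 2) with hρ
  have hCpos : 0 < C := by
    apply mul_pos <;> apply Real.rpow_pos_of_pos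
    · positivity
    · exact hM.det_pos
  have hqeq : (fun x : EuclideanSpace ℝ (Fin d) => quadForm M⁻¹ x)
      = fun x => dotProduct (fun i => x i) (M⁻¹.mulVec (fun i => x i)) := rfl
  have hqcont : Continuous fun x : EuclideanSpace ℝ (Fin d) => quadForm M⁻¹ x := by
    rw [hqeq]
    simp only [dotProduct, Matrix.mulVec]
    have : Continuous fun x : EuclideanSpace ℝ (Fin d) => (fun i => x i) := by fun_prop
    fun_prop
  have hρmeas : Measurable ρ := by
    apply Measurable.const_mul
    exact (Real.continuous_exp.comp ((hqcont.neg).div_const 2)).measurable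
  have hρpos : ∀ u, 0 ≤ ρ u := fun u => le_of_lt (mul_pos hCpos (Real.exp_pos _))
  -- step 1: withDensity to weighted integral
  have step1 : ∫ u, Real.cos (c * (inner ℝ u a : ℝ)) ∂(gaussianMeasure M)
      = ∫ u, ρ u * Real.cos (c * (inner ℝ u a : ℝ))
          ∂(volume : Measure (EuclideanSpace ℝ (Fin d))) := by
    have hgm : gaussianMeasure M
        = volume.withDensity (fun x => ((ρ x).toNNReal : ℝ≥0∞)) := rfl
    rw [hgm, integral_withDensity_eq_integral_smul (hρmeas.real_toNNReal)]
    congr 1 with u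
    rw [NNReal.smul_def, smul_eq_mul, Real.coe_toNNReal _ (hρpos u)]
  -- step 2: transfer to the pi space
  set a' : Fin d → ℝ := fun i => a i with ha'
  have step2 : ∫ u, ρ u * Real.cos (c * (inner ℝ u a : ℝ))
          ∂(volume : Measure (EuclideanSpace ℝ (Fin d)))
      = ∫ y : Fin d → ℝ, C * Real.exp (-(dotProduct y (M⁻¹.mulVec y)) / 2)
          * Real.cos (c * dotProduct y a') := by
    rw [← ((EuclideanSpace.volume_preserving_symm_measurableEquiv_toLp (Fin d)).symm).integral_comp
      (MeasurableEquiv.measurableEmbedding _)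
      (fun u => ρ u * Real.cos (c * (inner ℝ u a : ℝ)))]
    congr 1
    funext y
    simp only [hρ, ha', MeasurableEquiv.symm_symm]
    congr 3
    simp [PiLp.inner_apply, dotProduct, mul_comm]
  -- step 3: change of variables y = √M • y'
  set A := hM.posSemidef.sqrt with hA
  set b : Fin d → ℝ := A.mulVec a' with hb
  have hcont : Continuous fun y : Fin d → ℝ =>
      C * Real.exp (-(dotProduct y (M⁻¹.mulVec y)) / 2)
        * Real.cos (c * dotProduct y a') := by
    have h1 := cont_dot M⁻¹
    have h2 := cont_dot' a'
    fun_prop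
  have step3 : ∫ y : Fin d → ℝ, C * Real.exp (-(dotProduct y (M⁻¹.mulVec y)) / 2)
          * Real.cos (c * dotProduct y a')
      = |A.det| * ∫ y : Fin d → ℝ,
          C * Real.exp (-(∑ i, (y i)^2) / 2) * Real.cos (∑ i, (c * b i) * y i) := by
    rw [cov_sqrt hM _ hcont]
    congr 2 with y
    have hdq : dotProduct (A.mulVec y) (M⁻¹.mulVec (A.mulVec y)) = ∑ i, (y i)^2 :=
      quad_subst hM y
    have hdd : dotProduct (A.mulVec y) a' = dotProduct y b := dot_subst hM y a'
    rw [hdq, hdd]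
    congr 1
    rw [dotProduct, Finset.mul_sum]
    congr 1
    exact Finset.sum_congr rfl fun i _ => by ring
  -- step 4: Gaussian integral
  have step4 : ∫ y : Fin d → ℝ,
        C * Real.exp (-(∑ i, (y i)^2) / 2) * Real.cos (∑ i, (c * b i) * y i)
      = C * (((2*π) ^ ((1:ℝ)/2))^d * Real.exp (-(∑ i, (c * b i)^2)/2)) := by
    have he : (fun y : Fin d → ℝ => C * Real.exp (-(∑ i, (y i)^2) / 2)
          * Real.cos (∑ i, (c * b i) * y i))
        = fun y => C * (Real.exp (-∑ i, (y i)^2/2) * Real.cos (∑ i, (c * b i) * y i)) := by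
      funext y
      rw [neg_div, Finset.sum_div, mul_assoc]
    rw [he, integral_const_mul, gauss_cos_pi d (fun i => c * b i)]
  -- assemble
  rw [step1, step2, step3, step4]
  have h2π : (0:ℝ) < 2*π := by positivity
  have hdet := hM.det_pos
  have hsum : ∑ i, (c * b i)^2 = c^2 * quadForm M a := by
    have : ∑ i, (c * b i)^2 = c^2 * ∑ i, (b i)^2 := by
      rw [Finset.mul_sum]
      exact Finset.sum_congr rfl fun i _ => by ring
    rw [this, hb, sum_sq_sqrt_mulVec hM a']
    rfl
  have hP : ((2*π) ^ ((1:ℝ)/2))^d = (2*π) ^ ((d:ℝ)/2) := by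
    rw [← Real.rpow_natCast ((2*π) ^ ((1:ℝ)/2)) d, ← Real.rpow_mul (le_of_lt h2π)]
    congr 1
    ring
  have hDet : |A.det| = M.det ^ ((1:ℝ)/2) := by
    rw [sqrt_det_abs hM, Real.sqrt_eq_rpow]
  have hconst : |A.det| * (C * ((2*π) ^ ((1:ℝ)/2))^d) = 1 := by
    rw [hDet, hP, hC]
    calc M.det ^ ((1:ℝ)/2) * ((2*π) ^ (-(d:ℝ)/2) * M.det ^ (-(1:ℝ)/2) * (2*π) ^ ((d:ℝ)/2))
        = (M.det ^ ((1:ℝ)/2) * M.det ^ (-(1:ℝ)/2))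
          * ((2*π) ^ (-(d:ℝ)/2) * (2*π) ^ ((d:ℝ)/2)) := by ring
      _ = 1 := by
          rw [← Real.rpow_add hdet, ← Real.rpow_add h2π,
            show (1:ℝ)/2 + -(1:ℝ)/2 = 0 by ring, show -(d:ℝ)/2 + (d:ℝ)/2 = 0 by ring,
            Real.rpow_zero, Real.rpow_zero, one_mul]
  calc |A.det| * (C * (((2*π) ^ ((1:ℝ)/2))^d * Real.exp (-(∑ i, (c * b i)^2)/2)))
      = (|A.det| * (C * ((2*π) ^ ((1:ℝ)/2))^d)) * Real.exp (-(∑ i, (c * b i)^2)/2) := by ring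
    _ = Real.exp (-(c^2 * quadForm M a)/2) := by rw [hconst, one_mul, hsum]

lemma isProbability_gaussianMeasure (hM : M.PosDef) :
    IsProbabilityMeasure (gaussianMeasure M) := by
  constructor
  have h := integral_cos_gaussianMeasure hM 0 0
  simp [integral_const] at h
  rwa [measureReal_def, ENNReal.toReal_eq_one_iff] at h

lemma quadForm_nonneg (hM : M.PosDef) (a : EuclideanSpace ℝ (Fin d)) :
    0 ≤ quadForm M a := by
  by_cases ha : (fun i => a i) = 0
  · unfold quadForm
    rw [ha]
    simp
  · exact le_of_lt (by simpa [quadForm] using hM.dotProduct_mulVec_pos ha)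

lemma outer_integral (Q : ℝ) (hQ : 0 ≤ Q) :
    ∫ v : ℝ, Real.exp (-((v⁻¹)^2 * Q)/2) ∂(gaussianReal 0 1)
      = Real.exp (-Real.sqrt Q) := by
  rcases eq_or_lt_of_le hQ with h0 | hQpos
  · rw [← h0]
    simp
  · set σ := Real.sqrt Q with hσdef
    have hσ : 0 < σ := Real.sqrt_pos.mpr hQpos
    have hσ2 : σ^2 = Q := Real.sq_sqrt hQ
    have hgr : gaussianReal 0 1 = volume.withDensity (gaussianPDF 0 1) :=
      gaussianReal_of_var_ne_zero 0 one_ne_zero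
    have hpdf_nonneg : ∀ v : ℝ, 0 ≤ gaussianPDFReal 0 1 v := fun v =>
      gaussianPDFReal_nonneg 0 1 v
    have hd : gaussianReal 0 1
        = volume.withDensity (fun v => ((gaussianPDFReal 0 1 v).toNNReal : ℝ≥0∞)) := hgr
    rw [hd, integral_withDensity_eq_integral_smul
      ((measurable_gaussianPDFReal 0 1).real_toNNReal)]
    have hptw : ∀ v : ℝ, (gaussianPDFReal 0 1 v).toNNReal • Real.exp (-((v⁻¹)^2 * Q)/2)
        = (Real.sqrt (2*π))⁻¹ * Real.exp (-(v^2/2) - σ^2/(2*v^2)) := by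
      intro v
      rw [NNReal.smul_def, smul_eq_mul, Real.coe_toNNReal _ (hpdf_nonneg v)]
      unfold gaussianPDFReal
      rw [mul_assoc, ← Real.exp_add]
      congr 1
      · rw [NNReal.coe_one, mul_one]
      · rcases eq_or_ne v 0 with rfl | hv
        · simp
        · rw [hσ2]
          push_cast
          field_simp
          ring
    calc ∫ v : ℝ, (gaussianPDFReal 0 1 v).toNNReal • Real.exp (-((v⁻¹)^2 * Q)/2)
        = ∫ v : ℝ, (Real.sqrt (2*π))⁻¹ * Real.exp (-(v^2/2) - σ^2/(2*v^2)) := by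
          congr 1 with v
          exact hptw v
      _ = (Real.sqrt (2*π))⁻¹ * (Real.sqrt (2*π) * Real.exp (-σ)) := by
          rw [integral_const_mul, glasser σ hσ]
      _ = Real.exp (-σ) := by
          rw [← mul_assoc, inv_mul_cancel₀ (by positivity), one_mul]

lemma expectation_cos (hM : M.PosDef) (a : EuclideanSpace ℝ (Fin d)) :
    ∫ p : (EuclideanSpace ℝ (Fin d)) × ℝ,
        Real.cos ((p.2)⁻¹ * (inner ℝ p.1 a : ℝ))
        ∂((gaussianMeasure M).prod (gaussianReal 0 1))
      = Real.exp (-Real.sqrt (quadForm M a)) := by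
  have : IsProbabilityMeasure (gaussianMeasure M) := isProbability_gaussianMeasure hM
  have hFcont : Measurable fun p : (EuclideanSpace ℝ (Fin d)) × ℝ =>
      Real.cos ((p.2)⁻¹ * (inner ℝ p.1 a : ℝ)) := by
    apply Real.continuous_cos.measurable.comp
    exact (measurable_snd.inv).mul
      ((continuous_fst.inner continuous_const).measurable)
  have hint : Integrable (fun p : (EuclideanSpace ℝ (Fin d)) × ℝ =>
      Real.cos ((p.2)⁻¹ * (inner ℝ p.1 a : ℝ))) ((gaussianMeasure M).prod (gaussianReal 0 1)) := by
    apply Integrable.mono' (integrable_const 1) hFcont.aestronglyMeasurable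
    filter_upwards with p
    rw [Real.norm_eq_abs]
    exact Real.abs_cos_le_one _
  rw [integral_prod_symm _ hint]
  have hinner : ∀ v : ℝ, ∫ u, Real.cos ((v:ℝ)⁻¹ * (inner ℝ u a : ℝ)) ∂(gaussianMeasure M)
      = Real.exp (-(((v:ℝ)⁻¹)^2 * quadForm M a)/2) := fun v =>
    integral_cos_gaussianMeasure hM v⁻¹ a
  calc ∫ v : ℝ, (∫ u, Real.cos ((v:ℝ)⁻¹ * (inner ℝ u a : ℝ)) ∂(gaussianMeasure M))
        ∂(gaussianReal 0 1)
      = ∫ v : ℝ, Real.exp (-(((v:ℝ)⁻¹)^2 * quadForm M a)/2) ∂(gaussianReal 0 1) := by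
        congr 1 with v
        exact hinner v
    _ = Real.exp (-Real.sqrt (quadForm M a)) :=
        outer_integral _ (quadForm_nonneg hM a)
end G2

/-- **RFF for the Laplacian kernel.** For i.i.d. pairs `(u_i, v_i)` with
`u_i ~ N(0,M)` on `ℝ^d` independent of `v_i ~ N(0,1)`, the SinCos random features with
weight rows `w_i = u_i/v_i` satisfy, for all `x, z ∈ ℝ^d`, almost surely
`(1/p) Σ_{i<p} cos⟨u_i/v_i, x-z⟩ → e^{-‖x-z‖_M}`. -/
theorem rff_laplacian_kernel
    {Ω : Type*} [MeasurableSpace Ω] (P : Measure Ω) [IsProbabilityMeasure P]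
    (d : ℕ) (hd : 1 ≤ d) (M : Matrix (Fin d) (Fin d) ℝ) (hM : M.PosDef)
    (u : ℕ → Ω → EuclideanSpace ℝ (Fin d)) (v : ℕ → Ω → ℝ)
    (hmeas : ∀ i, Measurable fun ω => (u i ω, v i ω))
    (hindep : iIndepFun (fun i ω => (u i ω, v i ω)) P)
    (hlaw : ∀ i, Measure.map (fun ω => (u i ω, v i ω)) P =
      (gaussianMeasure M).prod (gaussianReal 0 1))
    (x z : EuclideanSpace ℝ (Fin d)) :
    ∀ᵐ ω ∂P, Tendsto (fun p : ℕ =>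
        (1 / (p : ℝ)) * ∑ i ∈ Finset.range p,
          Real.cos (inner ℝ ((v i ω)⁻¹ • u i ω) (x - z) : ℝ))
      atTop (nhds (Real.exp (-Real.sqrt (quadForm M (x - z))))) := by
  set a : EuclideanSpace ℝ (Fin d) := x - z with ha
  set F : (EuclideanSpace ℝ (Fin d)) × ℝ → ℝ :=
    fun p => Real.cos ((p.2)⁻¹ * (inner ℝ p.1 a : ℝ)) with hF
  have hFmeas : Measurable F := by
    apply Real.continuous_cos.measurable.comp
    exact (measurable_snd.inv).mul ((continuous_fst.inner continuous_const).measurable)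
  set X : ℕ → Ω → ℝ := fun i ω => F (u i ω, v i ω) with hX
  have hXmeas : ∀ i, Measurable (X i) := fun i => hFmeas.comp (hmeas i)
  have hident : ∀ i, IdentDistrib (X i) (X 0) P P := by
    intro i
    have hpair : IdentDistrib (fun ω => (u i ω, v i ω)) (fun ω => (u 0 ω, v 0 ω)) P P :=
      ⟨(hmeas i).aemeasurable, (hmeas 0).aemeasurable, by rw [hlaw i, hlaw 0]⟩
    exact hpair.comp hFmeas
  have hindep' : Pairwise (Function.onFun (IndepFun · · P) X) := fun i j hij =>
    (hindep.indepFun hij).comp hFmeas hFmeas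
  have hint : Integrable (X 0) P := by
    apply Integrable.mono' (integrable_const 1) (hXmeas 0).aestronglyMeasurable
    filter_upwards with ω
    rw [Real.norm_eq_abs]
    exact Real.abs_cos_le_one _
  have hmean : (∫ ω, X 0 ω ∂P) = Real.exp (-Real.sqrt (quadForm M a)) := by
    rw [hX]
    rw [← integral_map (hmeas 0).aemeasurable hFmeas.aestronglyMeasurable, hlaw 0]
    exact expectation_cos hM a
  have hslln := strong_law_ae_real X hint hindep' hident
  rw [hmean] at hslln
  filter_upwards [hslln] with ω hω
  refine hω.congr fun p => ?_
  rw [div_eq_mul_inv, mul_comm, ← one_div]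
  congr 1
  apply Finset.sum_congr rfl
  intro i _
  simp only [hX, hF]
  rw [real_inner_smul_left]
end
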